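/- arXiv:2303.14045 — 2 statements merged into one kernel-verified Lean document; each statement's English description precedes it below -/
import Mathlib

section
/- For every integer s ≥ 1, the rational function identity Υ_s/(1-z)^{s+1} - 2^{s+1}·Λ_s/((1-z)^{s+1}(1+z)^{s+1}) = ξ_s/(1+z)^{s+1} holds, where Υ_s = ∑_{k=1}^{s} A(s,k) z^{k-1}, Λ_s = ∑_{k=1}^{s} A(s,k) z^{2k-1}, and ξ_s = ∑_{k=1}^{s} A(s,k)(-1)^{k-1} z^{k-1}; equivalently Υ_s (1+z)^{s+1} - 2^{s+1} Λ_s = ξ_s (1-z)^{s+1} as polynomial identities over ℝ. -/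
open PowerSeries

/-- Eulerian numbers: `eulerian n j` is the number of permutations of `n` elements
with exactly `j` descents. -/
def eulerian : ℕ → ℕ → ℕ
  | 0, 0 => 1
  | 0, _ + 1 => 0
  | n + 1, 0 => eulerian n 0
  | n + 1, k + 1 => (k + 2) * eulerian n (k + 1) + (n + 1 - (k + 1)) * eulerian n k

/-- `A s k` is the Eulerian number counting permutations of `{1,…,s}` with `k-1` descents. -/
def A (s k : ℕ) : ℕ := eulerian s (k - 1)

lemma eulerian_eq_zero : ∀ n k : ℕ, n ≤ k → 1 ≤ k → eulerian n k = 0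
  | 0, k + 1, _, _ => rfl
  | n + 1, k + 1, h, _ => by
    have hk : n ≤ k := Nat.succ_le_succ_iff.mp h
    have h1 : eulerian n (k+1) = 0 := by
      cases n with
      | zero => rfl
      | succ m => exact eulerian_eq_zero (m+1) (k+1) (by omega) (Nat.succ_le_succ (Nat.zero_le _))
    have h2 : n + 1 - (k + 1) = 0 := by omega
    rw [eulerian, h1, h2]; ring

namespace Polynomial

/-- The Eulerian polynomial `∑_{j<n+1} eulerian n j · X^j`. -/
noncomputable def eulerSn (n : ℕ) : Polynomial ℝ :=
  ∑ j ∈ Finset.range (n + 1), C ((eulerian n j : ℝ)) * X ^ j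

lemma coeff_eulerSn (n k : ℕ) : (eulerSn n).coeff k = (eulerian n k : ℝ) := by
  unfold eulerSn
  rw [Polynomial.finset_sum_coeff]
  simp only [Polynomial.coeff_C_mul, Polynomial.coeff_X_pow, mul_ite, mul_one, mul_zero]
  rw [Finset.sum_ite_eq (Finset.range (n+1)) k (fun j => ((eulerian n j : ℝ)))]
  by_cases h : k ∈ Finset.range (n+1)
  · rw [if_pos h]
  · rw [if_neg h]
    rw [eulerian_eq_zero n k (by simp at h; omega) (by simp at h; omega)]
    simp

lemma rec_eulerSn (n : ℕ) : eulerSn (n + 1) =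
    (1 + (n : Polynomial ℝ) * X) * eulerSn n + X * ((1 - X) * derivative (eulerSn n)) := by
  ext k
  have hrhs : (1 + (n : Polynomial ℝ) * X) * eulerSn n + X * ((1 - X) * derivative (eulerSn n))
      = eulerSn n + (n : Polynomial ℝ) * (X * eulerSn n)
        + (X * derivative (eulerSn n) - X * (X * derivative (eulerSn n))) := by
    ring
  rw [hrhs]
  simp only [Polynomial.coeff_add, Polynomial.coeff_sub, Polynomial.coeff_natCast_mul,
    coeff_eulerSn]
  match k with
  | 0 =>
    simp [coeff_eulerSn]
    rfl
  | 1 =>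
    simp [Polynomial.coeff_X_mul, Polynomial.coeff_derivative, coeff_eulerSn]
    show ((eulerian (n+1) (0+1) : ℝ)) = _
    rw [eulerian]
    push_cast [Nat.add_sub_cancel]
    ring
  | (i + 2) =>
    simp only [Polynomial.coeff_X_mul, Polynomial.coeff_derivative, coeff_eulerSn]
    show ((eulerian (n+1) ((i+1)+1) : ℝ)) = _
    rw [eulerian]
    by_cases h : i + 1 ≤ n
    · push_cast [Nat.sub_sub, Nat.add_sub_cancel]
      rw [Nat.cast_sub (by omega)]
      push_cast
      ring
    · have h1 : eulerian n (i+1) = 0 := eulerian_eq_zero n (i+1) (by omega) (by omega)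
      have h2 : n + 1 - (i + 1 + 1) = 0 := by omega
      rw [h1, h2]
      push_cast
      ring

lemma eulerKey : ∀ n : ℕ, eulerSn n * (1 + X) ^ (n + 1)
      - (2 : Polynomial ℝ) ^ (n + 1) * (X * (eulerSn n).comp (X ^ 2))
    = (eulerSn n).comp (-X) * (1 - X) ^ (n + 1) := by
  intro n
  induction n with
  | zero =>
    have h0 : eulerSn 0 = 1 := by
      unfold eulerSn
      simp
      rfl
    rw [h0]
    simp
    ring
  | succ n IH =>
    have HD := congrArg derivative IH
    simp only [derivative_sub, derivative_mul, derivative_pow, derivative_add, derivative_one,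
      derivative_X, derivative_comp, derivative_neg, derivative_X_pow, Nat.add_sub_cancel,
      derivative_ofNat, map_add, map_one, map_natCast, map_ofNat, zero_add, add_zero, mul_one,
      mul_zero, zero_mul] at HD
    rw [rec_eulerSn]
    simp only [add_comp, mul_comp, one_comp, X_comp, natCast_comp, sub_comp]
    push_cast at HD ⊢
    linear_combination (1 + (2*(n:Polynomial ℝ)+1)*X^2) * IH + X*(1-X)*(1+X) * HD

end Polynomial

open Polynomial in
theorem stmt4 (s : ℕ) (hs : 1 ≤ s) :
    (∑ k ∈ Finset.Icc 1 s, (Polynomial.C (A s k : ℝ)) * Polynomial.X ^ (k - 1)) *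
        (1 + Polynomial.X) ^ (s + 1) -
      (Polynomial.C ((2 : ℝ) ^ (s + 1))) *
        (∑ k ∈ Finset.Icc 1 s, (Polynomial.C (A s k : ℝ)) * Polynomial.X ^ (2 * k - 1)) =
    (∑ k ∈ Finset.Icc 1 s, (Polynomial.C ((-1 : ℝ) ^ (k - 1) * A s k)) * Polynomial.X ^ (k - 1)) *
        (1 - Polynomial.X) ^ (s + 1) := by
  have hzero : (eulerian s s : ℝ) = 0 := by rw [eulerian_eq_zero s s le_rfl hs]; simp
  have hIcc : Finset.Icc 1 s = Finset.Ico 1 (s + 1) := (Finset.Ico_add_one_right_eq_Icc 1 s).symm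
  have h1 : (∑ k ∈ Finset.Icc 1 s, (Polynomial.C (A s k : ℝ)) * Polynomial.X ^ (k - 1))
      = Polynomial.eulerSn s := by
    rw [hIcc, Finset.sum_Ico_eq_sum_range]
    unfold Polynomial.eulerSn
    rw [Finset.sum_range_succ, hzero]
    simp only [map_zero, zero_mul, add_zero, Nat.add_sub_cancel, Nat.add_sub_cancel_left]
    apply Finset.sum_congr rfl
    intro i _
    have hy : 1 + i - 1 = i := by omega
    unfold A
    rw [hy]
  have h2 : (∑ k ∈ Finset.Icc 1 s, (Polynomial.C (A s k : ℝ)) * Polynomial.X ^ (2 * k - 1))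
      = Polynomial.X * (Polynomial.eulerSn s).comp (Polynomial.X ^ 2) := by
    rw [hIcc, Finset.sum_Ico_eq_sum_range]
    unfold Polynomial.eulerSn
    rw [← Polynomial.coe_compRingHom_apply, map_sum]
    rw [Finset.sum_range_succ, mul_add]
    simp only [Polynomial.coe_compRingHom_apply, Polynomial.mul_comp, Polynomial.C_comp,
      Polynomial.X_pow_comp, hzero, map_zero, zero_mul, mul_zero, add_zero, Nat.add_sub_cancel]
    rw [Finset.mul_sum]
    apply Finset.sum_congr rfl
    intro i _
    rw [← pow_mul]
    unfold A
    have hx : 2 * (1 + i) - 1 = 2 * i + 1 := by omega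
    have hy : 1 + i - 1 = i := by omega
    rw [hx, hy, pow_succ, pow_mul]
    ring
  have h3 : (∑ k ∈ Finset.Icc 1 s,
        (Polynomial.C ((-1 : ℝ) ^ (k - 1) * A s k)) * Polynomial.X ^ (k - 1))
      = (Polynomial.eulerSn s).comp (-Polynomial.X) := by
    rw [hIcc, Finset.sum_Ico_eq_sum_range]
    unfold Polynomial.eulerSn
    rw [← Polynomial.coe_compRingHom_apply, map_sum]
    rw [Finset.sum_range_succ]
    simp only [Polynomial.coe_compRingHom_apply, Polynomial.mul_comp, Polynomial.C_comp,
      Polynomial.X_pow_comp, hzero, map_zero, zero_mul, add_zero, Nat.add_sub_cancel]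
    apply Finset.sum_congr rfl
    intro i _
    have hy : 1 + i - 1 = i := by omega
    unfold A
    have hneg : (-Polynomial.X : Polynomial ℝ) ^ i = Polynomial.C ((-1:ℝ)^i) * Polynomial.X ^ i := by
      rw [neg_pow, map_pow, map_neg, map_one]
    rw [hy, map_mul, hneg]
    ring
  rw [h1, h2, h3]
  rw [show Polynomial.C ((2:ℝ)^(s+1)) = (2 : Polynomial ℝ)^(s+1) by rw [map_pow, map_ofNat]]
  exact Polynomial.eulerKey s
end

section
/- For every integer s ≥ 1, the alternating sum of Eulerian numbers satisfies ∑_{k=1}^{s} A(s,k) (-1)^{k-1} = -(B_{s+1}/(s+1)) · (2^{s+1} - 4^{s+1}), where B_{s+1} is the (s+1)-th Bernoulli number. -/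
open PowerSeries

open Finset

lemma eulerian_zero_right : ∀ n, eulerian n 0 = 1
  | 0 => rfl
  | n + 1 => by rw [show eulerian (n+1) 0 = eulerian n 0 from rfl, eulerian_zero_right n]

lemma eulerian_vanish : ∀ n k, 1 ≤ k → n ≤ k → eulerian n k = 0 := by
  intro n
  induction n with
  | zero =>
    intro k h1 _
    obtain ⟨k, rfl⟩ : ∃ k', k = k' + 1 := ⟨k - 1, by omega⟩
    rfl
  | succ n ih =>
    intro k h1 h2
    obtain ⟨k, rfl⟩ : ∃ k', k = k' + 1 := ⟨k - 1, by omega⟩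
    show (k + 2) * eulerian n (k + 1) + (n + 1 - (k + 1)) * eulerian n k = 0
    rw [ih (k+1) (by omega) (by omega), Nat.succ_sub_succ, (by omega : n - k = 0)]
    ring

lemma choose_cast_succ (s j : ℕ) :
    ((j : ℚ) + 1) * (((s+1).choose (j+1) : ℕ) : ℚ) = ((s : ℚ) + 1) * ((s.choose j : ℕ) : ℚ) := by
  have h : (((s+1) * s.choose j : ℕ) : ℚ) = (((s+1).choose (j+1) * (j+1) : ℕ) : ℚ) := by
    exact_mod_cast congrArg (fun x : ℕ => (x : ℚ)) (Nat.add_one_mul_choose_eq s j)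
  push_cast at h
  linear_combination -h

lemma choose_cast_sub (s i : ℕ) :
    ((s : ℚ) + 1 - (i : ℚ)) * (((s+1).choose i : ℕ) : ℚ) = ((s : ℚ) + 1) * ((s.choose i : ℕ) : ℚ) := by
  rcases le_or_gt i (s+1) with h | h
  · have h2 : (((s).choose i * (s + 1) : ℕ) : ℚ) = (((s+1).choose i * (s + 1 - i) : ℕ) : ℚ) := by
      exact_mod_cast congrArg (fun x : ℕ => (x : ℚ)) (Nat.choose_mul_succ_eq s i)
    rw [Nat.cast_mul, Nat.cast_mul, Nat.cast_sub h] at h2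
    push_cast at h2
    linear_combination -h2
  · rw [Nat.choose_eq_zero_of_lt h, Nat.choose_eq_zero_of_lt (by omega)]
    simp

lemma eulerian_succ_succ_cast (s k : ℕ) :
    (eulerian (s+1) (k+1) : ℚ)
      = ((k : ℚ) + 2) * (eulerian s (k+1) : ℚ) + ((s : ℚ) - (k : ℚ)) * (eulerian s k : ℚ) := by
  have h : eulerian (s+1) (k+1) = (k + 2) * eulerian s (k+1) + (s + 1 - (k+1)) * eulerian s k := rfl
  rcases le_or_gt k s with hks | hks
  · rw [h, Nat.succ_sub_succ]
    push_cast [Nat.cast_sub hks]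
    ring
  · rw [h, Nat.succ_sub_succ, Nat.sub_eq_zero_of_le (le_of_lt hks),
      eulerian_vanish s k (by omega) (le_of_lt hks)]
    push_cast
    ring

lemma sum_range_ext (f : ℕ → ℚ) {a b : ℕ} (h : a ≤ b) (h0 : ∀ i, a ≤ i → i < b → f i = 0) :
    ∑ i ∈ range b, f i = ∑ i ∈ range a, f i :=
  (sum_subset (range_subset_range.mpr h)
    (fun x hx hxa => h0 x (by simpa using hxa) (mem_range.mp hx))).symm


lemma eulerian_zero_succ (k : ℕ) : eulerian 0 (k+1) = 0 := rfl

lemma eulerian_explicit : ∀ (s k : ℕ), (eulerian s k : ℚ) =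
    ∑ i ∈ range (k+1), (-1:ℚ)^i * (((s+1).choose i : ℕ) : ℚ) * (((k+1-i : ℕ)) : ℚ)^s := by
  intro s
  induction s with
  | zero =>
    intro k
    cases k with
    | zero => simp [eulerian_zero_right]
    | succ k =>
      rw [eulerian_zero_succ]
      rw [sum_range_ext _ (show 2 ≤ k+1+1 by omega)
        (fun i h2 _ => by
          rw [Nat.choose_eq_zero_of_lt (show 1 < i by omega)]
          simp)]
      simp [sum_range_succ]
  | succ s ih =>
    intro k
    cases k with
    | zero =>
      simp [eulerian_zero_right]
    | succ k =>
      rw [eulerian_succ_succ_cast, ih (k+1), ih k]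
      set F1 : ℚ := ∑ i ∈ range (k+1+1), (-1:ℚ)^i * (((s+1).choose i : ℕ) : ℚ) * (((k+1+1-i : ℕ)) : ℚ)^s with hF1
      set F0 : ℚ := ∑ i ∈ range (k+1), (-1:ℚ)^i * (((s+1).choose i : ℕ) : ℚ) * (((k+1-i : ℕ)) : ℚ)^s with hF0
      set A1 : ℚ := ∑ i ∈ range (k+2), (-1:ℚ)^i * (((s+1).choose i : ℕ) : ℚ) * (((k+2-i : ℕ)) : ℚ)^(s+1) with hA1
      set A0 : ℚ := ∑ i ∈ range (k+1), (-1:ℚ)^i * (((s+1).choose i : ℕ) : ℚ) * (((k+1-i : ℕ)) : ℚ)^(s+1) with hA0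
      set D : ℚ := ∑ j ∈ range (k+1), (-1:ℚ)^j * ((s.choose j : ℕ) : ℚ) * (((k+1-j : ℕ)) : ℚ)^s with hD
      -- goal : (k+2) * F1 + (s-k) * F0 = A1 - A0  -- after establishing goal = that
      have hgoal : (∑ i ∈ range (k+1+1), (-1:ℚ)^i * (((s+1+1).choose i : ℕ) : ℚ) * (((k+1+1-i : ℕ)) : ℚ)^(s+1)) = A1 - A0 := by
        rw [hA1, sum_range_succ' (fun i => (-1:ℚ)^i * (((s+1+1).choose i : ℕ) : ℚ) * (((k+1+1-i : ℕ)) : ℚ)^(s+1)) (k+1),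
          sum_range_succ' (fun i => (-1:ℚ)^i * (((s+1).choose i : ℕ) : ℚ) * (((k+2-i : ℕ)) : ℚ)^(s+1)) (k+1)]
        have hsh : ∑ i ∈ range (k+1), (-1:ℚ)^(i+1) * (((s+1+1).choose (i+1) : ℕ) : ℚ) * (((k+1+1-(i+1) : ℕ)) : ℚ)^(s+1)
            = (∑ i ∈ range (k+1), (-1:ℚ)^(i+1) * (((s+1).choose (i+1) : ℕ) : ℚ) * (((k+2-(i+1) : ℕ)) : ℚ)^(s+1)) - A0 := by
          rw [hA0, ← sum_sub_distrib]
          refine sum_congr rfl fun i hi => ?_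
          rw [Nat.choose_succ_succ (s+1) i]
          simp only [show k+1+1-(i+1) = k+1-i from by omega, show k+2-(i+1) = k+1-i from by omega,
            Nat.succ_eq_add_one]
          push_cast
          ring
        rw [hsh]
        norm_num
        ring
      rw [hgoal]
      -- key identities
      have hM : A1 - ((k:ℚ)+2) * F1 = ((s:ℚ)+1) * D := by
        have step1 : A1 - ((k:ℚ)+2) * F1
            = ∑ i ∈ range (k+2), (-1:ℚ)^(i+1) * ((i:ℚ) * (((s+1).choose i : ℕ) : ℚ)) * (((k+2-i : ℕ)) : ℚ)^s := by
          rw [hA1, hF1, mul_sum, ← sum_sub_distrib]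
          refine sum_congr rfl fun i hi => ?_
          have hi' : i < k + 2 := mem_range.mp hi
          have hc : (((k+2-i : ℕ)) : ℚ) = (k:ℚ) + 2 - i := by
            rw [Nat.cast_sub (by omega)]
            push_cast; ring
          have h12 : (k+1+1-i : ℕ) = (k+2-i : ℕ) := by omega
          rw [h12, hc, pow_succ]
          ring
        rw [step1, sum_range_succ'
          (fun i => (-1:ℚ)^(i+1) * ((i:ℚ) * (((s+1).choose i : ℕ) : ℚ)) * (((k+2-i : ℕ)) : ℚ)^s) (k+1)]
        have hz : ((-1:ℚ)^(0+1) * (((0:ℕ):ℚ) * (((s+1).choose 0 : ℕ) : ℚ)) * (((k+2-0 : ℕ)) : ℚ)^s) = 0 := by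
          norm_num
        rw [hD, mul_sum]
        norm_num
        refine sum_congr rfl fun j hj => ?_
        have h1 : k+2-(j+1) = k+1-j := by omega
        have hpow : (-1:ℚ)^(j+1+1) = (-1:ℚ)^j := by
          rw [pow_succ, pow_succ]; ring
        rw [h1, hpow]
        have := choose_cast_succ s j
        push_cast
        push_cast at this
        linear_combination ((-1:ℚ)^j) * (((k+1-j : ℕ)):ℚ)^s * this
      have hA0' : A0 + ((s:ℚ)-(k:ℚ)) * F0 = ((s:ℚ)+1) * D := by
        rw [hA0, hF0, hD, mul_sum, mul_sum, ← sum_add_distrib]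
        refine sum_congr rfl fun i hi => ?_
        have hi' : i < k + 1 := mem_range.mp hi
        have hc : (((k+1-i : ℕ)) : ℚ) = (k:ℚ) + 1 - i := by
          rw [Nat.cast_sub (by omega)]
          push_cast; ring
        have := choose_cast_sub s i
        rw [hc, pow_succ]
        linear_combination ((-1:ℚ)^i) * ((k:ℚ)+1-i)^s * this
      linear_combination hA0' - hM

noncomputable section

def Vq (s t : ℕ) : ℚ := ∑ m ∈ range t, (-1:ℚ)^m * ((m:ℚ)+1)^s
def Pq (s n : ℕ) : ℚ := ∑ i ∈ range n, (i:ℚ)^s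
def Tq (s : ℕ) : ℚ := ∑ j ∈ range (s+2), (-1:ℚ)^j * (eulerian s j : ℚ)

lemma trunc (s : ℕ) (hs : 1 ≤ s) (K : ℕ) (hK : s ≤ K) :
    ∑ j ∈ range K, (-1:ℚ)^j * (eulerian s j : ℚ) = Tq s := by
  have key : ∀ M, s ≤ M → ∑ j ∈ range M, (-1:ℚ)^j * (eulerian s j:ℚ)
      = ∑ j ∈ range s, (-1:ℚ)^j * (eulerian s j:ℚ) := by
    intro M hM
    exact sum_range_ext _ hM (fun i hi _ => by
      rw [eulerian_vanish s i (by omega) hi]; simp)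
  rw [key K hK, Tq, key (s+2) (by omega)]

lemma swap_lemma (s K : ℕ) :
    ∑ j ∈ range K, (-1:ℚ)^j * (eulerian s j : ℚ)
      = ∑ i ∈ range K, (((s+1).choose i : ℕ) : ℚ) * Vq s (K - i) := by
  calc ∑ j ∈ range K, (-1:ℚ)^j * (eulerian s j : ℚ)
      = ∑ k ∈ range K, ∑ i ∈ range (k+1),
          (-1:ℚ)^k * ((-1:ℚ)^i * (((s+1).choose i : ℕ) : ℚ) * (((k+1-i : ℕ)) : ℚ)^s) := by
        refine sum_congr rfl fun k _ => ?_
        rw [eulerian_explicit, mul_sum]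
    _ = ∑ i ∈ range K, ∑ k ∈ Ico i K,
          (-1:ℚ)^k * ((-1:ℚ)^i * (((s+1).choose i : ℕ) : ℚ) * (((k+1-i : ℕ)) : ℚ)^s) := by
        simp_rw [range_eq_Ico]
        rw [← sum_Ico_Ico_comm]
    _ = ∑ i ∈ range K, (((s+1).choose i : ℕ) : ℚ) * Vq s (K - i) := by
        refine sum_congr rfl fun i _ => ?_
        rw [sum_Ico_eq_sum_range, Vq, mul_sum]
        refine sum_congr rfl fun m _ => ?_
        rw [show i + m + 1 - i = m + 1 from by omega]
        have hp : (-1:ℚ)^(i+m) * (-1:ℚ)^i = (-1:ℚ)^m := by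
          rw [← pow_add, show i+m+i = 2*i+m from by omega, pow_add, pow_mul]
          norm_num
        push_cast
        linear_combination (((s+1).choose i : ℕ) : ℚ) * ((m:ℚ)+1)^s * hp

lemma vsplit (s a t : ℕ) :
    Vq s (a + t) = Vq s a + ∑ j ∈ range t, (-1:ℚ)^(a+j) * (((a+j : ℕ):ℚ)+1)^s := by
  have h := Finset.sum_Ico_eq_sum_range (f := fun m => (-1:ℚ)^m * ((m:ℚ)+1)^s) (m := a) (n := a+t)
  rw [Vq, Vq, range_eq_Ico,
    ← sum_Ico_consecutive _ (Nat.zero_le a) (Nat.le_add_right a t), h]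
  simp [Nat.Ico_zero_eq_range]

lemma VP (s : ℕ) (hs : 1 ≤ s) (N : ℕ) :
    Vq s (2*N) = Pq s (2*N+1) - 2^(s+1) * Pq s (N+1) := by
  induction N with
  | zero =>
    simp [Vq, Pq, zero_pow (show s ≠ 0 by omega)]
  | succ n ih =>
    have hV : Vq s (2*(n+1)) = Vq s (2*n) + (2*(n:ℚ)+1)^s - (2*(n:ℚ)+2)^s := by
      rw [show 2*(n+1) = (2*n+1)+1 from by ring, Vq, sum_range_succ, sum_range_succ, ← Vq]
      have hodd : (-1:ℚ)^(2*n+1) = -1 := by rw [pow_succ, pow_mul]; norm_num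
      have heven : (-1:ℚ)^(2*n) = 1 := by rw [pow_mul]; norm_num
      rw [hodd, heven]; push_cast; ring
    have hP2 : Pq s (2*(n+1)+1) = Pq s (2*n+1) + (2*(n:ℚ)+1)^s + (2*(n:ℚ)+2)^s := by
      rw [show 2*(n+1)+1 = ((2*n+1)+1)+1 from by ring, Pq, sum_range_succ, sum_range_succ, ← Pq]
      push_cast; ring
    have hP1 : Pq s (n+1+1) = Pq s (n+1) + ((n:ℚ)+1)^s := by
      rw [Pq, sum_range_succ, ← Pq]; push_cast; ring
    have hmp : (2:ℚ)^(s+1)*((n:ℚ)+1)^s = 2*(2*(n:ℚ)+2)^s := by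
      rw [show (2*(n:ℚ)+2) = 2*((n:ℚ)+1) from by ring, mul_pow, pow_succ]; ring
    rw [hV, hP2, hP1, ih]
    linear_combination hmp

lemma alt_pow : ∀ (p n : ℕ), p < n → ∑ r ∈ range (n+1), (-1:ℚ)^r * ((n.choose r : ℕ):ℚ) * (r:ℚ)^p = 0 := by
  intro p
  induction p using Nat.strong_induction_on with
  | _ p ih =>
    intro n hn
    cases p with
    | zero =>
      have h := Int.alternating_sum_range_choose_of_ne (show n ≠ 0 by omega)
      have : ((∑ m ∈ range (n + 1), ((-1) ^ m * n.choose m : ℤ) : ℤ) : ℚ) = 0 := by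
        rw [h]; norm_num
      push_cast at this
      simpa using this
    | succ q =>
      obtain ⟨m, rfl⟩ : ∃ m, n = m + 1 := ⟨n - 1, by omega⟩
      rw [sum_range_succ' (fun r => (-1:ℚ)^r * (((m+1).choose r : ℕ):ℚ) * (r:ℚ)^(q+1)) (m+1)]
      have h0 : (-1:ℚ)^0 * (((m+1).choose 0 : ℕ):ℚ) * ((0:ℕ):ℚ)^(q+1) = 0 := by
        simp
      rw [h0, add_zero]
      have hterm : ∀ j ∈ range (m+1), (-1:ℚ)^(j+1) * (((m+1).choose (j+1) : ℕ):ℚ) * (((j+1:ℕ)):ℚ)^(q+1)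
          = (-((m:ℚ)+1)) * ((-1:ℚ)^j * ((m.choose j : ℕ):ℚ) * ((j:ℚ)+1)^q) := by
        intro j _
        have hc := choose_cast_succ m j
        have hp : (-1:ℚ)^(j+1) = -(-1:ℚ)^j := by rw [pow_succ]; ring
        push_cast
        rw [hp]
        have hpow : ((j:ℚ)+1)^(q+1) = ((j:ℚ)+1)^q * ((j:ℚ)+1) := pow_succ _ _
        linear_combination (-(-1:ℚ)^j * ((j:ℚ)+1)^q) * hc + (-(-1:ℚ)^j * (((m+1).choose (j+1):ℕ):ℚ)) * hpow
      rw [sum_congr rfl hterm, ← mul_sum]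
      have hz : ∑ j ∈ range (m+1), (-1:ℚ)^j * ((m.choose j:ℕ):ℚ) * ((j:ℚ)+1)^q = 0 := by
        have hexp : ∀ j : ℕ, ((j:ℚ)+1)^q = ∑ a ∈ range (q+1), ((q.choose a : ℕ):ℚ) * (j:ℚ)^a := by
          intro j
          rw [add_pow]
          refine sum_congr rfl fun a ha => ?_
          simp [mul_comm]
        calc ∑ j ∈ range (m+1), (-1:ℚ)^j * ((m.choose j:ℕ):ℚ) * ((j:ℚ)+1)^q
            = ∑ j ∈ range (m+1), ∑ a ∈ range (q+1),
                ((q.choose a:ℕ):ℚ) * ((-1:ℚ)^j * ((m.choose j:ℕ):ℚ) * (j:ℚ)^a) := by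
              refine sum_congr rfl fun j _ => ?_
              rw [hexp j, mul_sum]
              exact sum_congr rfl fun a _ => by ring
          _ = ∑ a ∈ range (q+1), ((q.choose a:ℕ):ℚ)
                * ∑ j ∈ range (m+1), (-1:ℚ)^j * ((m.choose j:ℕ):ℚ) * (j:ℚ)^a := by
              rw [sum_comm]
              exact sum_congr rfl fun a _ => (mul_sum _ _ _).symm
          _ = 0 := by
              refine sum_eq_zero fun a ha => ?_
              have haq := mem_range.mp ha
              rw [ih a haq m (by omega), mul_zero]
      rw [hz, mul_zero]

lemma sum_choose_V (s : ℕ) (hs : 1 ≤ s) (K : ℕ) (hK : s ≤ K) :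
    Tq s = ∑ i ∈ range (s+2), (((s+1).choose i : ℕ) : ℚ) * Vq s (K - i) := by
  rw [← trunc s hs K hK, swap_lemma]
  have e1 : ∑ i ∈ range (K + (s+2)), (((s+1).choose i : ℕ) : ℚ) * Vq s (K - i)
      = ∑ i ∈ range K, (((s+1).choose i : ℕ) : ℚ) * Vq s (K - i) :=
    sum_range_ext _ (by omega) (fun i hi _ => by
      rw [show K - i = 0 from by omega]
      simp [Vq])
  have e2 : ∑ i ∈ range (K + (s+2)), (((s+1).choose i : ℕ) : ℚ) * Vq s (K - i)
      = ∑ i ∈ range (s+2), (((s+1).choose i : ℕ) : ℚ) * Vq s (K - i) :=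
    sum_range_ext _ (by omega) (fun i hi _ => by
      rw [Nat.choose_eq_zero_of_lt (show s+1 < i from by omega)]
      simp)
  rw [← e1, e2]

lemma mainN (s : ℕ) (hs : 1 ≤ s) (N : ℕ) :
    Tq s = 2^(s+1) * Vq s (2*N)
      + ∑ i ∈ range (s+2), (((s+1).choose i : ℕ) : ℚ) *
          ∑ j ∈ range (s+1-i), (-1:ℚ)^j * (2*(N:ℚ)+(j:ℚ)+1)^s := by
  have h1 := sum_choose_V s hs (2*N+s+1) (by omega)
  have h2 : ∀ i ∈ range (s+2), (((s+1).choose i : ℕ) : ℚ) * Vq s (2*N+s+1 - i)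
      = (((s+1).choose i : ℕ) : ℚ) * Vq s (2*N)
        + (((s+1).choose i : ℕ) : ℚ) * ∑ j ∈ range (s+1-i), (-1:ℚ)^j * (2*(N:ℚ)+(j:ℚ)+1)^s := by
    intro i hi
    have hi' : i < s + 2 := mem_range.mp hi
    rw [show 2*N+s+1-i = 2*N + (s+1-i) from by omega, vsplit, mul_add]
    congr 1
    rw [mul_sum, mul_sum]
    refine sum_congr rfl fun j _ => ?_
    have hp : (-1:ℚ)^(2*N+j) = (-1:ℚ)^j := by
      rw [pow_add, pow_mul]; norm_num
    rw [hp]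
    push_cast
    ring
  rw [h1, sum_congr rfl h2, sum_add_distrib, ← sum_mul]
  have hch : ∑ i ∈ range (s+2), (((s+1).choose i : ℕ) : ℚ) = 2^(s+1) := by
    have := Nat.sum_range_choose (s+1)
    have h : ((∑ m ∈ range (s+2), (s+1).choose m : ℕ) : ℚ) = ((2^(s+1) : ℕ) : ℚ) := by
      exact_mod_cast congrArg (fun x : ℕ => (x:ℚ)) this
    push_cast at h
    exact h
  rw [hch]

lemma whalf (s : ℕ) (hs : 1 ≤ s) :
    ∑ i ∈ range (s+2), (((s+1).choose i : ℕ) : ℚ) *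
        ∑ j ∈ range (s+1-i), (-1:ℚ)^j * (j:ℚ)^s = - Tq s := by
  have hT := sum_choose_V s hs (s+1) (by omega)
  have h2 : ∀ i ∈ range (s+2), ∑ j ∈ range (s+1-i), (-1:ℚ)^j * (j:ℚ)^s = - Vq s (s-i) := by
    intro i hi
    have hi' : i < s + 2 := mem_range.mp hi
    rcases eq_or_lt_of_le (Nat.lt_succ_iff.mp hi') with he | hlt
    · rw [he]
      simp [Vq, show s - (s+1) = 0 from by omega, show s+1-(s+1) = 0 from by omega]
    · have hile : i ≤ s := by omega
      rw [show s+1-i = (s-i)+1 from by omega,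
        sum_range_succ' (fun j => (-1:ℚ)^j * (j:ℚ)^s) (s-i)]
      have h0 : (-1:ℚ)^0 * ((0:ℕ):ℚ)^s = 0 := by
        simp [zero_pow (show s ≠ 0 by omega)]
      rw [h0, add_zero, Vq, ← sum_neg_distrib]
      refine sum_congr rfl fun j _ => ?_
      rw [pow_succ]
      push_cast
      ring
  rw [sum_congr rfl (fun i hi => by rw [h2 i hi] :
    ∀ i ∈ range (s+2), (((s+1).choose i : ℕ) : ℚ) * ∑ j ∈ range (s+1-i), (-1:ℚ)^j * (j:ℚ)^s
      = (((s+1).choose i : ℕ) : ℚ) * (- Vq s (s-i)))]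
  have hdiff : ∑ i ∈ range (s+2), (((s+1).choose i : ℕ) : ℚ) * Vq s (s+1-i)
      - ∑ i ∈ range (s+2), (((s+1).choose i : ℕ) : ℚ) * Vq s (s-i)
      = ∑ j ∈ range (s+1), (-1:ℚ)^j * (((s+1).choose (j+1) : ℕ):ℚ) * ((j:ℚ)+1)^s := by
    rw [← sum_sub_distrib, sum_range_succ,
      show s+1-(s+1) = 0 from by omega, show s-(s+1) = 0 from by omega, sub_self, add_zero]
    have hstep : ∀ i ∈ range (s+1),
        (((s+1).choose i : ℕ) : ℚ) * Vq s (s+1-i) - (((s+1).choose i : ℕ) : ℚ) * Vq s (s-i)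
        = (fun j => (-1:ℚ)^j * (((s+1).choose (s-j) : ℕ):ℚ) * ((j:ℚ)+1)^s) (s-i) := by
      intro i hi
      have hile : i ≤ s := by have := mem_range.mp hi; omega
      simp only
      rw [show s+1-i = (s-i)+1 from by omega, Vq, Vq, sum_range_succ,
        show s-(s-i) = i from by omega]
      ring
    rw [sum_congr rfl hstep]
    have hrefl := sum_range_reflect
      (fun j => (-1:ℚ)^j * (((s+1).choose (s-j) : ℕ):ℚ) * ((j:ℚ)+1)^s) (s+1)
    simp only [Nat.add_sub_cancel] at hrefl
    rw [hrefl]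
    refine sum_congr rfl fun j hj => ?_
    have hj' : j + 1 ≤ s + 1 := by have := mem_range.mp hj; omega
    rw [show s - j = s+1-(j+1) from by omega, Nat.choose_symm hj']
  have hz := alt_pow s (s+1) (by omega)
  rw [sum_range_succ' (fun r => (-1:ℚ)^r * (((s+1).choose r : ℕ):ℚ) * (r:ℚ)^s) (s+1)] at hz
  have h0 : (-1:ℚ)^0 * (((s+1).choose 0 : ℕ):ℚ) * ((0:ℕ):ℚ)^s = 0 := by
    simp [zero_pow (show s ≠ 0 by omega)]
  rw [h0, add_zero] at hz
  have hneg : ∑ j ∈ range (s+1), (-1:ℚ)^(j+1) * (((s+1).choose (j+1) : ℕ):ℚ) * (((j+1:ℕ)):ℚ)^s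
      = - ∑ j ∈ range (s+1), (-1:ℚ)^j * (((s+1).choose (j+1) : ℕ):ℚ) * ((j:ℚ)+1)^s := by
    rw [← sum_neg_distrib]
    refine sum_congr rfl fun j _ => ?_
    rw [pow_succ]
    push_cast
    ring
  rw [hneg, neg_eq_zero] at hz
  have hmn : ∑ i ∈ range (s+2), (((s+1).choose i : ℕ) : ℚ) * (- Vq s (s-i))
      = - ∑ i ∈ range (s+2), (((s+1).choose i : ℕ) : ℚ) * Vq s (s-i) := by
    rw [← sum_neg_distrib]
    exact sum_congr rfl fun i _ => by ring
  rw [hmn]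
  linarith [hT, hdiff, hz]

lemma bern_key : rescale (2:ℚ) (bernoulliPowerSeries ℚ) * (exp ℚ + 1) = 2 * bernoulliPowerSeries ℚ := by
  have hexp : exp ℚ - 1 ≠ 0 := by
    intro h
    have := congrArg (coeff 1) h
    simp [coeff_exp] at this
  apply mul_right_cancel₀ hexp
  have h2 : exp ℚ * exp ℚ = rescale (2:ℚ) (exp ℚ) := by
    have := exp_mul_exp_eq_exp_add (1:ℚ) 1
    rw [show (2:ℚ) = 1 + 1 by norm_num]
    simpa [rescale_one] using this
  calc rescale (2:ℚ) (bernoulliPowerSeries ℚ) * (exp ℚ + 1) * (exp ℚ - 1)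
      = rescale (2:ℚ) (bernoulliPowerSeries ℚ) * (rescale (2:ℚ) (exp ℚ) - 1) := by
        rw [← h2]; ring
    _ = rescale (2:ℚ) (bernoulliPowerSeries ℚ * (exp ℚ - 1)) := by
        rw [map_mul, map_sub, map_one]
    _ = rescale (2:ℚ) X := by rw [bernoulliPowerSeries_mul_exp_sub_one]
    _ = 2 * bernoulliPowerSeries ℚ * (exp ℚ - 1) := by
        rw [mul_assoc, bernoulliPowerSeries_mul_exp_sub_one, rescale_X]
        ext n
        rw [show (2 : ℚ⟦X⟧) = C (2:ℚ) from (map_ofNat (C (R := ℚ)) 2).symm]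

lemma bern_aux (s : ℕ) :
    ∑ i ∈ range (s+1), (((s+1).choose i : ℕ):ℚ) * bernoulli i * 2^i
      = (2 - 2^(s+2)) * bernoulli (s+1) := by
  have hco := congrArg (coeff (s+1)) bern_key
  rw [mul_add, mul_one, map_add, coeff_mul,
    Finset.Nat.sum_antidiagonal_eq_sum_range_succ_mk] at hco
  simp only [coeff_rescale, bernoulliPowerSeries, coeff_mk, coeff_exp,
    Algebra.algebraMap_self, RingHom.id_apply] at hco
  rw [show (2:ℚ⟦X⟧) = C (2:ℚ) from (map_ofNat (C (R := ℚ)) 2).symm, coeff_C_mul, coeff_mk] at hco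
  have hfac : ∀ m : ℕ, (m.factorial : ℚ) ≠ 0 := fun m => by exact_mod_cast m.factorial_ne_zero
  have hfull : ∑ x ∈ range (s+2), (((s+1).choose x : ℕ):ℚ) * bernoulli x * 2^x
      = ((s+1).factorial : ℚ) * ∑ x ∈ range (s+1).succ,
          2^x * (bernoulli x / (x.factorial:ℚ)) * (1/(((s+1-x).factorial:ℕ):ℚ)) := by
    rw [mul_sum]
    refine sum_congr rfl fun x hx => ?_
    have hxle : x ≤ s+1 := by have := mem_range.mp hx; omega
    rw [Nat.cast_choose ℚ hxle]
    field_simp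
  have hco2 : ((s+1).factorial : ℚ) * ∑ x ∈ range (s+1).succ,
          2^x * (bernoulli x / (x.factorial:ℚ)) * (1/(((s+1-x).factorial:ℕ):ℚ))
      = (2 - 2^(s+1)) * bernoulli (s+1) := by
    have hFS : ∑ x ∈ range (s+1).succ,
          2^x * (bernoulli x / (x.factorial:ℚ)) * (1/(((s+1-x).factorial:ℕ):ℚ))
        = (2 - 2^(s+1)) * (bernoulli (s+1) / (((s+1).factorial:ℕ):ℚ)) := by
      rw [sub_mul]
      linarith [hco]
    rw [hFS]
    field_simp
  rw [hco2] at hfull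
  rw [sum_range_succ, Nat.choose_self] at hfull
  have : ((1:ℕ):ℚ) = 1 := by norm_num
  rw [this] at hfull
  linear_combination hfull

theorem stmt5 (s : ℕ) (hs : 1 ≤ s) :
    (∑ k ∈ Finset.Icc 1 s, (-1 : ℚ) ^ (k - 1) * (A s k : ℚ)) =
      -(bernoulli (s + 1) / (s + 1)) * (2 ^ (s + 1) - 4 ^ (s + 1)) := by
  have hsne : ((s:ℚ) + 1) ≠ 0 := by positivity
  have hLHS : (∑ k ∈ Finset.Icc 1 s, (-1 : ℚ) ^ (k - 1) * (A s k : ℚ)) = Tq s := by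
    rw [← Finset.Ico_add_one_right_eq_Icc, Finset.sum_Ico_eq_sum_range]
    rw [show s + 1 - 1 = s from by omega]
    rw [← trunc s hs s le_rfl]
    refine sum_congr rfl fun j _ => ?_
    rw [show 1 + j - 1 = j from by omega, A, show 1 + j - 1 = j from by omega]
  rw [hLHS]
  classical
  set pB : Polynomial ℚ := ∑ i ∈ range (s+1),
    Polynomial.C (bernoulli i * (((s+1).choose i:ℕ):ℚ) / ((s:ℚ)+1)) * Polynomial.X^(s+1-i) with hpB
  set W : Polynomial ℚ := ∑ i ∈ range (s+2), ∑ j ∈ range (s+1-i),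
    Polynomial.C ((-1:ℚ)^j * (((s+1).choose i:ℕ):ℚ))
      * (Polynomial.C 2 * Polynomial.X + Polynomial.C ((j:ℚ)+1))^s with hW
  set G : Polynomial ℚ := Polynomial.C ((2:ℚ)^(s+1)) *
      (pB.comp (Polynomial.C 2 * Polynomial.X + Polynomial.C 1)
        - Polynomial.C ((2:ℚ)^(s+1)) * pB.comp (Polynomial.X + Polynomial.C 1))
    + W - Polynomial.C (Tq s) with hG
  have hpBeval : ∀ x : ℚ, pB.eval x
      = ∑ i ∈ range (s+1), bernoulli i * (((s+1).choose i:ℕ):ℚ) * x^(s+1-i) / ((s:ℚ)+1) := by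
    intro x
    rw [hpB, Polynomial.eval_finset_sum]
    refine sum_congr rfl fun i _ => ?_
    simp
    try ring
  have hWeval : ∀ x : ℚ, W.eval x = ∑ i ∈ range (s+2), (((s+1).choose i:ℕ):ℚ) *
      ∑ j ∈ range (s+1-i), (-1:ℚ)^j * (2*x + (j:ℚ) + 1)^s := by
    intro x
    rw [hW, Polynomial.eval_finset_sum]
    refine sum_congr rfl fun i _ => ?_
    rw [Polynomial.eval_finset_sum, mul_sum]
    refine sum_congr rfl fun j _ => ?_
    simp
    try ring
  have hpBP : ∀ n : ℕ, pB.eval (n:ℚ) = Pq s n := by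
    intro n
    rw [hpBeval, Pq, sum_range_pow]
  have hGeval : ∀ x : ℚ, G.eval x = (2:ℚ)^(s+1) * (pB.eval (2*x+1) - 2^(s+1) * pB.eval (x+1))
      + W.eval x - Tq s := by
    intro x
    rw [hG]
    simp [Polynomial.eval_comp]
  have hGN : ∀ N : ℕ, G.eval ((N:ℚ)) = 0 := by
    intro N
    rw [hGeval]
    rw [show (2*(N:ℚ)+1) = ((2*N+1:ℕ):ℚ) from by push_cast; ring,
      show ((N:ℚ)+1) = ((N+1:ℕ):ℚ) from by push_cast; ring,
      hpBP, hpBP, hWeval]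
    have := mainN s hs N
    have hVPN := VP s hs N
    linear_combination -this - 2^(s+1) * hVPN
  have hGzero : G = 0 := by
    refine Polynomial.eq_zero_of_infinite_isRoot _ ?_
    apply Set.infinite_of_injective_forall_mem (f := fun n : ℕ => (n:ℚ)) Nat.cast_injective
    intro n
    exact hGN n
  have hGhalf : G.eval (-(1:ℚ)/2) = 0 := by rw [hGzero]; simp
  rw [hGeval] at hGhalf
  have hpB0 : pB.eval (2*(-(1:ℚ)/2)+1) = 0 := by
    rw [show (2*(-(1:ℚ)/2)+1) = 0 from by norm_num, hpBeval]
    refine sum_eq_zero fun i hi => ?_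
    rw [zero_pow (show s+1-i ≠ 0 from by have := mem_range.mp hi; omega)]
    ring
  have hpBhalf : ((s:ℚ)+1) * 2^(s+1) * pB.eval (-(1:ℚ)/2+1) = (2 - 2^(s+2)) * bernoulli (s+1) := by
    rw [show (-(1:ℚ)/2+1) = 1/2 from by norm_num, hpBeval, ← bern_aux s, mul_sum]
    refine sum_congr rfl fun i hi => ?_
    have hile : i ≤ s := by have := mem_range.mp hi; omega
    have hp2 : (2:ℚ)^(s+1) = 2^i * 2^(s+1-i) := by
      rw [← pow_add]
      congr 1
      omega
    have hhalf : ((1:ℚ)/2)^(s+1-i) * 2^(s+1-i) = 1 := by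
      rw [← mul_pow]
      norm_num
    have key : ((s:ℚ)+1) * (bernoulli i * (((s+1).choose i:ℕ):ℚ) * ((1:ℚ)/2)^(s+1-i) / ((s:ℚ)+1))
        = bernoulli i * (((s+1).choose i:ℕ):ℚ) * ((1:ℚ)/2)^(s+1-i) := by
      field_simp
    calc ((s:ℚ)+1) * 2^(s+1) * (bernoulli i * (((s+1).choose i:ℕ):ℚ) * ((1:ℚ)/2)^(s+1-i) / ((s:ℚ)+1))
        = 2^(s+1) * (((s:ℚ)+1) * (bernoulli i * (((s+1).choose i:ℕ):ℚ) * ((1:ℚ)/2)^(s+1-i) / ((s:ℚ)+1))) := by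
          ring
      _ = 2^(s+1) * (bernoulli i * (((s+1).choose i:ℕ):ℚ) * ((1:ℚ)/2)^(s+1-i)) := by rw [key]
      _ = (((s+1).choose i:ℕ):ℚ) * bernoulli i * 2^i := by
          rw [hp2]
          linear_combination (bernoulli i * (((s+1).choose i:ℕ):ℚ) * 2^i) * hhalf
  have hWhalf : W.eval (-(1:ℚ)/2) = - Tq s := by
    rw [hWeval, ← whalf s hs]
    refine sum_congr rfl fun i _ => ?_
    rw [mul_sum, mul_sum]
    refine sum_congr rfl fun j _ => ?_
    rw [show (2*(-(1:ℚ)/2) + (j:ℚ) + 1) = (j:ℚ) from by ring]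
  rw [hpB0, hWhalf] at hGhalf
  have h4 : (4:ℚ)^(s+1) = 2^(s+1) * 2^(s+1) := by
    rw [show (4:ℚ) = 2*2 from by norm_num, mul_pow]
  rw [h4]
  have hfin : Tq s * ((s:ℚ)+1) = -(bernoulli (s+1) * (2^(s+1) - 2^(s+1)*2^(s+1))) := by
    linear_combination (-(1:ℚ)/2 * ((s:ℚ)+1)) * hGhalf - (2:ℚ)^s * hpBhalf
  field_simp
  linear_combination hfin
end
end
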